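/- For any may-must argumentation F = (A, R, f_Q) in which every argument a has f_Q(a) = ((|pre(a)|, |pre(a)|), (1, 1)): the set of maximally proper labellings of F equals the set of exact labellings of F, which equals the set of complete labellings of the Dung framework (A, R). In particular the maxi.complete semantics of such F equals the complete semantics of (A, R). -/

import Mathlib

/-!
Under these thresholds an argument's label is proper exactly when Dung's completeness condition
holds at it: `inn` iff all attackers are `out` (`outCnt = |pre(a)|`), `out` iff some attacker is
`inn` (`inCnt ≥ 1`). Hence exact labellings are the complete ones. Since a complete labelling
always exists (the grounded one: iterating Dung's characteristic function from the all-`undec`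
labelling gives an increasing chain in the information order, which stabilises since there are
finitely many labellings), a maximally proper labelling must make every argument proper, so it is
exact; conversely every exact labelling is trivially maximally proper.
-/

inductive Lab : Type
  | inn | out | undec
deriving DecidableEq

structure MMA (A : Type) [Fintype A] [DecidableEq A] where
  R : A → A → Prop
  decR : DecidableRel R
  n1 : A → ℕ
  n2 : A → ℕ
  m1 : A → ℕ
  m2 : A → ℕ
  hn : ∀ a, n1 a ≤ n2 a
  hm : ∀ a, m1 a ≤ m2 a

variable {A : Type} [Fintype A] [DecidableEq A]

/-- Number of attackers of `a` labelled `out` by `lam`. -/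
def outCnt (F : MMA A) (lam : A → Lab) (a : A) : ℕ :=
  letI := F.decR
  (Finset.univ.filter (fun b => F.R b a ∧ lam b = Lab.out)).card

/-- Number of attackers of `a` labelled `in` by `lam`. -/
def inCnt (F : MMA A) (lam : A → Lab) (a : A) : ℕ :=
  letI := F.decR
  (Finset.univ.filter (fun b => F.R b a ∧ lam b = Lab.inn)).card

/-- `lam` designates label `l` for argument `a` in `F`. -/
def designates (F : MMA A) (lam : A → Lab) (a : A) : Lab → Prop
  | Lab.inn => F.n1 a ≤ outCnt F lam a ∧ inCnt F lam a < F.m2 a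
  | Lab.out => F.m1 a ≤ inCnt F lam a ∧ outCnt F lam a < F.n2 a
  | Lab.undec =>
      (F.n2 a ≤ outCnt F lam a ∧ F.m2 a ≤ inCnt F lam a) ∨
      (F.n1 a ≤ outCnt F lam a ∧ outCnt F lam a < F.n2 a) ∨
      (F.m1 a ≤ inCnt F lam a ∧ inCnt F lam a < F.m2 a) ∨
      (outCnt F lam a < F.n1 a ∧ inCnt F lam a < F.m1 a)

/-- `a`'s label is proper under `lam`. -/
def proper (F : MMA A) (lam : A → Lab) (a : A) : Prop :=
  designates F lam a (lam a)

/-- Exact labelling: every argument's label is proper. -/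
def exactLab (F : MMA A) (lam : A → Lab) : Prop :=
  ∀ a, proper F lam a

/-- Pre-maximally proper labelling. -/
def preMaxProper (F : MMA A) (lam : A → Lab) : Prop :=
  ∀ a, proper F lam a ∨ lam a = Lab.undec

/-- Maximally proper labelling. -/
def maxProper (F : MMA A) (lam : A → Lab) : Prop :=
  preMaxProper F lam ∧
    ∀ lam', preMaxProper F lam' → ∀ a, proper F lam' a → proper F lam a

/-- The order `⪯` on labellings. -/
def labLE (l1 l2 : A → Lab) : Prop :=
  ∀ a, (l1 a = Lab.inn → l2 a = Lab.inn) ∧ (l1 a = Lab.out → l2 a = Lab.out)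

/-- Number of attackers of `a`. -/
def preCard (F : MMA A) (a : A) : ℕ :=
  letI := F.decR
  (Finset.univ.filter (fun b => F.R b a)).card

/-- Complete labelling of the underlying Dung framework. -/
def dungComplete (F : MMA A) (lam : A → Lab) : Prop :=
  ∀ a, (lam a = Lab.inn ↔ ∀ b, F.R b a → lam b = Lab.out) ∧
       (lam a = Lab.out ↔ ∃ b, F.R b a ∧ lam b = Lab.inn)

section Counting

variable (F : MMA A) (lam : A → Lab) (a : A)

theorem outCnt_le_preCard : outCnt F lam a ≤ preCard F a :=
  let _ := F.decR
  Finset.card_le_card fun b => by simp +contextual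

theorem outCnt_eq_preCard_iff :
    outCnt F lam a = preCard F a ↔ ∀ b, F.R b a → lam b = Lab.out := by
  let _ := F.decR
  rw [outCnt, preCard, ← Finset.filter_filter, Finset.card_filter_eq_iff]
  simp

theorem inCnt_pos_iff : 0 < inCnt F lam a ↔ ∃ b, F.R b a ∧ lam b = Lab.inn := by
  let _ := F.decR
  rw [inCnt, Finset.card_pos, Finset.filter_nonempty_iff]
  simp

theorem inCnt_eq_zero_of_outCnt_eq_preCard (h : outCnt F lam a = preCard F a) :
    inCnt F lam a = 0 := by
  by_contra hne
  obtain ⟨b, hb, hin⟩ := (inCnt_pos_iff F lam a).1 (Nat.pos_of_ne_zero hne)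
  simp [(outCnt_eq_preCard_iff F lam a).1 h b hb] at hin

theorem proper_iff_of_thresholds
    (ha : F.n1 a = preCard F a ∧ F.n2 a = preCard F a ∧ F.m1 a = 1 ∧ F.m2 a = 1) :
    proper F lam a ↔ (lam a = Lab.inn ↔ ∀ b, F.R b a → lam b = Lab.out) ∧
      (lam a = Lab.out ↔ ∃ b, F.R b a ∧ lam b = Lab.inn) := by
  obtain ⟨h1, h2, h3, h4⟩ := ha
  have hle := outCnt_le_preCard F lam a
  have hzero := inCnt_eq_zero_of_outCnt_eq_preCard F lam a
  rw [← outCnt_eq_preCard_iff, ← inCnt_pos_iff, proper]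
  cases lam a <;>
    simp only [designates, h1, h2, h3, h4, reduceCtorEq, true_iff, false_iff] <;> omega

end Counting

theorem exactLab_iff_dungComplete (F : MMA A) (lam : A → Lab)
    (h : ∀ a, F.n1 a = preCard F a ∧ F.n2 a = preCard F a ∧ F.m1 a = 1 ∧ F.m2 a = 1) :
    exactLab F lam ↔ dungComplete F lam :=
  forall_congr' fun a => proper_iff_of_thresholds F lam a (h a)

theorem maxProper_iff_exactLab {F : MMA A} (hex : ∃ lam₀, exactLab F lam₀) (lam : A → Lab) :
    maxProper F lam ↔ exactLab F lam := by
  obtain ⟨lam₀, hlam₀⟩ := hex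
  constructor
  · rintro ⟨-, hmax⟩ a
    exact hmax lam₀ (fun b => Or.inl (hlam₀ b)) a (hlam₀ a)
  · intro hlam
    exact ⟨fun a => Or.inl (hlam a), fun _ _ a _ => hlam a⟩

namespace Lab

/-- The information order on labels. -/
instance : PartialOrder Lab where
  le x y := x = undec ∨ x = y
  le_refl _ := Or.inr rfl
  le_trans := by rintro x y z (rfl | rfl) (rfl | rfl) <;> simp
  le_antisymm := by rintro x y (rfl | rfl) (h | h) <;> simp_all

instance : OrderBot Lab where
  bot := undec
  bot_le _ := Or.inl rfl

instance : Fintype Lab :=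
  ⟨{inn, out, undec}, fun x => by cases x <;> simp⟩

theorem eq_of_ne_undec_of_le {x y : Lab} (hx : x ≠ undec) (h : x ≤ y) : y = x :=
  (h.resolve_left hx).symm

end Lab

open Classical in
noncomputable def dungStep (F : MMA A) (lam : A → Lab) (a : A) : Lab :=
  if ∀ b, F.R b a → lam b = Lab.out then Lab.inn
  else if ∃ b, F.R b a ∧ lam b = Lab.inn then Lab.out
  else Lab.undec

section DungStep

variable (F : MMA A) (lam : A → Lab) (a : A)

theorem dungStep_eq_inn_iff :
    dungStep F lam a = Lab.inn ↔ ∀ b, F.R b a → lam b = Lab.out := by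
  unfold dungStep
  split_ifs <;> simp_all

theorem dungStep_eq_out_iff :
    dungStep F lam a = Lab.out ↔ ∃ b, F.R b a ∧ lam b = Lab.inn := by
  unfold dungStep
  split_ifs with hall hex
  · simp only [false_iff]
    rintro ⟨b, hb, hin⟩
    simp [hall b hb] at hin
  · simpa using hex
  · simpa using hex

theorem dungStep_mono : Monotone (dungStep F) := by
  intro l₁ l₂ hl a
  cases h : dungStep F l₁ a
  · have hall : ∀ b, F.R b a → l₂ b = Lab.out := fun b hb =>
      Lab.eq_of_ne_undec_of_le nofun ((dungStep_eq_inn_iff F l₁ a).1 h b hb ▸ hl b)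
    rw [(dungStep_eq_inn_iff F l₂ a).2 hall]
  · obtain ⟨b, hb, hin⟩ := (dungStep_eq_out_iff F l₁ a).1 h
    rw [(dungStep_eq_out_iff F l₂ a).2 ⟨b, hb, Lab.eq_of_ne_undec_of_le nofun (hin ▸ hl b)⟩]
  · exact bot_le

theorem dungComplete_of_dungStep_eq (h : dungStep F lam = lam) : dungComplete F lam := fun a => by
  rw [← congrFun h a]
  exact ⟨dungStep_eq_inn_iff F lam a, dungStep_eq_out_iff F lam a⟩

end DungStep

theorem exists_dungComplete (F : MMA A) : ∃ lam, dungComplete F lam := by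
  obtain ⟨n, hn⟩ := WellFoundedGT.monotone_chain_condition
    ⟨fun n => (dungStep F)^[n] ⊥, (dungStep_mono F).monotone_iterate_of_le_map bot_le⟩
  refine ⟨(dungStep F)^[n] ⊥, dungComplete_of_dungStep_eq F _ ?_⟩
  rw [← Function.iterate_succ_apply' (dungStep F)]
  exact (hn (n + 1) n.le_succ).symm

theorem stmt10 (F : MMA A)
    (h : ∀ a, F.n1 a = preCard F a ∧ F.n2 a = preCard F a ∧ F.m1 a = 1 ∧ F.m2 a = 1) :
    ∀ lam : A → Lab,
      (maxProper F lam ↔ exactLab F lam) ∧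
      (exactLab F lam ↔ dungComplete F lam) := by
  obtain ⟨lam₀, hlam₀⟩ := exists_dungComplete F
  have hexact (lam : A → Lab) := exactLab_iff_dungComplete F lam h
  have hmax := maxProper_iff_exactLab ⟨lam₀, (hexact lam₀).2 hlam₀⟩
  exact fun lam => ⟨hmax lam, hexact lam⟩
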